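/- Let q ≥ 2, k ≥ 2 and t ∈ {1,...,k−1} be integers and let I be a maximization instance of k CSP-q with opt(I) ≠ wor(I) in which every constraint function has arity at least t and is balanced t-wise independent, and which admits a strong coloring with ν colors, where ν ≥ k. Suppose there exists an orthogonal array OA(R, ν−t, q, min{k, ν−t}) in which some word of Σ_q^{ν−t} occurs as a row exactly R* > 0 times. Then the average differential ratio of I is at least R*/R; equivalently, E[v(I,X)] ≥ (R*/R)·opt(I) + (1 − R*/R)·wor(I). -/

import Mathlib

/-- An instance of the (maximization) problem `k CSP-q` with `n` variables:
`m` weighted constraints, where constraint `i` has positive weight `w i`,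
arity `arity i ≤ k`, a strictly increasing tuple `idx i` of indices of the
variables it depends on, and a constraint function `P i : Σ_q^{arity i} → ℝ`. -/
structure CSPInstance (q k n : ℕ) where
  m : ℕ
  w : Fin m → ℝ
  w_pos : ∀ i, 0 < w i
  arity : Fin m → ℕ
  arity_le : ∀ i, arity i ≤ k
  idx : (i : Fin m) → Fin (arity i) → Fin n
  idx_mono : ∀ i, StrictMono (idx i)
  P : (i : Fin m) → ((Fin (arity i) → Fin q) → ℝ)

namespace CSPInstance

variable {q k n : ℕ}

/-- The objective value `v(I, x)` of a solution `x ∈ Σ_q^n`. -/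
def value (I : CSPInstance q k n) (x : Fin n → Fin q) : ℝ :=
  ∑ i : Fin I.m, I.w i * I.P i (fun s => x (I.idx i s))

/-- `opt(I)`, the best (maximum) objective value. -/
noncomputable def opt (I : CSPInstance q k n) : ℝ := sSup (Set.range I.value)

/-- `wor(I)`, the worst (minimum) objective value. -/
noncomputable def wor (I : CSPInstance q k n) : ℝ := sInf (Set.range I.value)

/-- `E[v(I,X)]`, the average objective value over all `q^n` solutions. -/
noncomputable def avg (I : CSPInstance q k n) : ℝ :=
  (∑ x : Fin n → Fin q, I.value x) / (q : ℝ) ^ n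

/-- A strong coloring of `I` with `ν` colors: an assignment of colors to variables such
that the support of each constraint meets each color class in at most one index. -/
def StrongColoring (I : CSPInstance q k n) (ν : ℕ) : Prop :=
  ∃ c : Fin n → Fin ν, ∀ i : Fin I.m, Function.Injective (fun s => c (I.idx i s))

end CSPInstance

/-- A function `P : Σ_q^κ → ℝ` is balanced `t`-wise independent: for every `t` indices
`j 0 < ... < j (t-1)` and every `v ∈ Σ_q^t`, the average of `P` over the slice
`{y : y ∘ j = v}` equals the average of `P` over `Σ_q^κ` (stated in a fraction-free way:
the slice has `q^(κ-t)` elements and the full cube has `q^κ` elements). -/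
def BalancedTwise (q t : ℕ) {κ : ℕ} (P : (Fin κ → Fin q) → ℝ) : Prop :=
  ∀ j : Fin t → Fin κ, StrictMono j → ∀ v : Fin t → Fin q,
    (∑ y ∈ Finset.univ.filter (fun y : Fin κ → Fin q => ∀ s, y (j s) = v s), P y) * (q : ℝ) ^ t
      = ∑ y : Fin κ → Fin q, P y

/-- `M` is an orthogonal array `OA(R, ν, q, t)`: for every `t` pairwise distinct columns
`c 0 < ... < c (t-1)` and every word `v ∈ Σ_q^t`, exactly `R / q^t` rows of `M` restrict to
`v` on these columns. -/
def IsOA (R ν q t : ℕ) (M : Fin R → Fin ν → Fin q) : Prop :=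
  ∀ c : Fin t → Fin ν, StrictMono c → ∀ v : Fin t → Fin q,
    (Finset.univ.filter fun r => ∀ s, M r (c s) = v s).card * q ^ t = R

/-!
Fix an optimal solution `x*` and a strong colouring `col`. The colours `< ν - t` are the columns
of the orthogonal array; row `r` yields the solution `x_r = x* + (M r - u) ∘ col`, with shift `0`
on the remaining `t` colours, so the `R*` rows equal to `u` all give `x*`. A constraint sees
pairwise distinct colours, so on its variables with colours `< ν - t` (at most `min k (ν - t)` of
them) the shifts are uniformly distributed over the rows, while at most `t` of its variables stay
at `x*`; balancedness on those coordinates then says the constraint has the same average over the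
rows as over all assignments. Hence `v(I, x_r)` averages to `E[v(I, X)]`, and bounding the `R*`
optimal rows by `opt(I)` and the others by `wor(I)` gives the claim.
-/

open Finset Function

variable {q : ℕ}

section Balanced

variable {ι : Type*} [Fintype ι] [DecidableEq ι]

def IsBalancedOn (P : (ι → Fin q) → ℝ) (T : Finset ι) : Prop :=
  ∀ v : ι → Fin q, (∑ y with ∀ p ∈ T, y p = v p, P y) * (q : ℝ) ^ #T = ∑ y, P y

lemma isBalancedOn_empty (P : (ι → Fin q) → ℝ) : IsBalancedOn P ∅ := by
  simp [IsBalancedOn]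

lemma IsBalancedOn.of_insert [NeZero q] {P : (ι → Fin q) → ℝ} {T : Finset ι} {a : ι}
    (ha : a ∉ T) (h : IsBalancedOn P (insert a T)) : IsBalancedOn P T := by
  intro v
  have hslice (b : Fin q) :
      (∑ y with (∀ p ∈ T, y p = v p) ∧ y a = b, P y) * (q : ℝ) ^ (#T + 1) = ∑ y, P y := by
    rw [← card_insert_of_notMem ha, ← h (update v a b)]
    congr 2
    ext y
    simp only [mem_filter, mem_univ, true_and, forall_mem_insert, update_self]
    refine ⟨fun ⟨hT, hb⟩ => ⟨hb, fun p hp => ?_⟩, fun ⟨hb, hT⟩ => ⟨fun p hp => ?_, hb⟩⟩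
    · rw [update_of_ne (ne_of_mem_of_not_mem hp ha), hT p hp]
    · rw [hT p hp, update_of_ne (ne_of_mem_of_not_mem hp ha)]
  apply mul_right_cancel₀ (NeZero.ne (q : ℝ))
  calc (∑ y with ∀ p ∈ T, y p = v p, P y) * (q : ℝ) ^ #T * q
      = ∑ b : Fin q, (∑ y with (∀ p ∈ T, y p = v p) ∧ y a = b, P y) * (q : ℝ) ^ (#T + 1) := by
        rw [← sum_fiberwise _ (fun y => y a), sum_mul, sum_mul]
        refine sum_congr rfl fun b _ => ?_
        rw [filter_filter, pow_succ, mul_assoc]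
    _ = (∑ y, P y) * q := by simp [hslice, mul_comm]

lemma IsBalancedOn.mono [NeZero q] {P : (ι → Fin q) → ℝ} {T U : Finset ι} (hTU : T ⊆ U)
    (h : IsBalancedOn P U) : IsBalancedOn P T := by
  suffices ∀ D : Finset ι, IsBalancedOn P (T ∪ D) → IsBalancedOn P T from
    this U (by rwa [union_eq_right.mpr hTU])
  intro D
  induction D using Finset.induction_on with
  | empty => simp
  | insert a D _ ih =>
    rw [union_insert]
    by_cases haTD : a ∈ T ∪ D
    · rw [insert_eq_of_mem haTD]; exact ih
    · exact fun h => ih (h.of_insert haTD)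

lemma BalancedTwise.isBalancedOn_of_card_eq {κ t : ℕ} {P : (Fin κ → Fin q) → ℝ}
    (hP : BalancedTwise q t P) {T : Finset (Fin κ)} (hT : #T = t) : IsBalancedOn P T := by
  intro v
  have hslice := hP (T.orderEmbOfFin hT) (T.orderEmbOfFin hT).strictMono
    (fun s => v (T.orderEmbOfFin hT s))
  rw [hT, ← hslice]
  congr 2
  ext y
  simp only [mem_filter, mem_univ, true_and]
  have hrange : ∀ p, p ∈ T ↔ p ∈ Set.range (T.orderEmbOfFin hT) := by simp
  simp only [hrange, Set.forall_mem_range]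

lemma BalancedTwise.isBalancedOn [NeZero q] {κ t : ℕ} {P : (Fin κ → Fin q) → ℝ}
    (hP : BalancedTwise q t P) (htκ : t ≤ κ) {T : Finset (Fin κ)} (hT : #T ≤ t) :
    IsBalancedOn P T := by
  obtain ⟨U, hTU, -, hU⟩ := exists_subsuperset_card_eq (subset_univ T) hT (by simpa using htκ)
  exact (hP.isBalancedOn_of_card_eq hU).mono hTU

/-- `he` says that the words `e r` are uniformly distributed on the subcube of words vanishing
on `F`. -/
lemma IsBalancedOn.sum_add_mul_pow {ρ : Type*} [Fintype ρ] [NeZero q] {P : (ι → Fin q) → ℝ}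
    {F : Finset ι} (hP : IsBalancedOn P F) (e : ρ → ι → Fin q)
    (he : ∀ y, #{r | e r = y} * q ^ #Fᶜ = if ∀ p ∈ F, y p = 0 then Fintype.card ρ else 0)
    (z : ι → Fin q) :
    (∑ r, P (z + e r)) * (q : ℝ) ^ Fintype.card ι = Fintype.card ρ * ∑ y, P y := by
  have htranslate :
      ∑ y with ∀ p ∈ F, y p = 0, P (z + y) = ∑ y with ∀ p ∈ F, y p = z p, P y := by
    rw [sum_filter, sum_filter]
    exact Fintype.sum_equiv (Equiv.addLeft z) _ _ fun y => by simp
  have hcube : (∑ r, P (z + e r)) * (q : ℝ) ^ #Fᶜ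
      = Fintype.card ρ * ∑ y with ∀ p ∈ F, y p = z p, P y := by
    rw [← htranslate, ← sum_fiberwise' univ e (fun y => P (z + y)), sum_mul, sum_filter, mul_sum]
    refine sum_congr rfl fun y _ => ?_
    have hy := congrArg (Nat.cast : ℕ → ℝ) (he y)
    push_cast at hy
    rw [sum_const, nsmul_eq_mul, mul_right_comm, hy]
    split_ifs <;> simp
  rw [← card_compl_add_card F, pow_add, ← mul_assoc, hcube, mul_assoc, hP z]

end Balanced

section OrthogonalArray

variable {ρ γ : Type*} [Fintype ρ] [Fintype γ] [DecidableEq γ]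

def IsOrthogonalOn (M : ρ → γ → Fin q) (C : Finset γ) : Prop :=
  ∀ w : γ → Fin q, #{r | ∀ c ∈ C, M r c = w c} * q ^ #C = Fintype.card ρ

lemma sum_filter_card_fiber (M : ρ → γ → Fin q) (p : (γ → Fin q) → Prop) [DecidablePred p] :
    ∑ w with p w, (#{r | M r = w} : ℝ) = #{r | p (M r)} := by
  rw [← Nat.cast_sum, sum_card_fiberwise_eq_card_filter]
  simp

lemma sum_card_fiber (M : ρ → γ → Fin q) : ∑ w, (#{r | M r = w} : ℝ) = Fintype.card ρ := by
  simpa using sum_filter_card_fiber M (fun _ => True)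

lemma IsOA.balancedTwise_card_fiber {R N s : ℕ} {M : Fin R → Fin N → Fin q}
    (h : IsOA R N q s M) : BalancedTwise q s (fun w => (#{r | M r = w} : ℝ)) := by
  intro j hj v
  rw [sum_filter_card_fiber, sum_card_fiber, Fintype.card_fin]
  exact_mod_cast h j hj v

lemma IsOA.isOrthogonalOn [NeZero q] {R N s : ℕ} {M : Fin R → Fin N → Fin q}
    (h : IsOA R N q s M) (hsN : s ≤ N) {C : Finset (Fin N)} (hC : #C ≤ s) :
    IsOrthogonalOn M C := by
  intro w
  have hslice := h.balancedTwise_card_fiber.isBalancedOn hsN hC w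
  rw [sum_filter_card_fiber, sum_card_fiber] at hslice
  exact_mod_cast hslice

end OrthogonalArray

lemma isOrthogonalOn_id [NeZero q] {γ : Type*} [Fintype γ] [DecidableEq γ] (C : Finset γ) :
    IsOrthogonalOn (fun x : γ → Fin q => x) C := by
  intro w
  have hpi : ({x | ∀ c ∈ C, x c = w c} : Finset (γ → Fin q))
      = Fintype.piFinset fun c => if c ∈ C then {w c} else univ := by
    ext x; simp only [mem_filter, mem_univ, true_and, Fintype.mem_piFinset]
    refine forall_congr' fun c => ?_
    split_ifs <;> simp [*]
  rw [hpi, Fintype.card_piFinset]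
  simp [apply_ite card, prod_ite, ← pow_add, filter_not, ← compl_eq_univ_sdiff]

lemma card_filter_extend_comp_mul_pow [NeZero q] {ρ γ β ι : Type*} [Fintype ρ] [Fintype γ]
    [DecidableEq γ] [DecidableEq β] [Fintype ι] [DecidableEq ι] {M : ρ → γ → Fin q}
    {emb : γ → β} (hemb : Injective emb) {g : ι → β} (hg : Injective g)
    (hM : ∀ C : Finset γ, #C ≤ Fintype.card ι → IsOrthogonalOn M C) (u : γ → Fin q)
    {F : Finset ι} (hF : ∀ p, p ∈ F ↔ g p ∉ Set.range emb) (y : ι → Fin q) :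
    #{r | extend emb (M r - u) 0 ∘ g = y} * q ^ #Fᶜ
      = if ∀ p ∈ F, y p = 0 then Fintype.card ρ else 0 := by
  split_ifs with hy
  swap
  · push Not at hy
    obtain ⟨p, hpF, hyp⟩ := hy
    rw [card_eq_zero.mpr, zero_mul]
    refine filter_eq_empty_iff.mpr fun r _ hr => hyp ?_
    rw [← hr, comp_apply, extend_apply' _ _ _ ((hF p).mp hpF), Pi.zero_apply]
  set C : Finset γ := {c | emb c ∈ univ.image g}
  have hC : #C = #Fᶜ := by
    rw [← card_image_of_injective C hemb, ← card_image_of_injective Fᶜ hg]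
    congr 1
    ext b
    simp only [C, mem_image, mem_filter, mem_univ, true_and, mem_compl, hF, not_not]
    constructor
    · rintro ⟨c, ⟨p, hp⟩, rfl⟩; exact ⟨p, ⟨c, hp.symm⟩, hp⟩
    · rintro ⟨p, ⟨c, hc⟩, rfl⟩; exact ⟨c, ⟨p, hc.symm⟩, hc⟩
  have hfiber (r : ρ) :
      extend emb (M r - u) 0 ∘ g = y ↔ ∀ c ∈ C, M r c = u c + extend g y 0 (emb c) := by
    constructor
    · rintro rfl c hc
      obtain ⟨p, -, hp⟩ := mem_image.mp (mem_filter.mp hc).2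
      rw [← hp, hg.extend_apply, comp_apply, hp, hemb.extend_apply, Pi.sub_apply, add_sub_cancel]
    · intro h
      funext p
      by_cases hp : g p ∈ Set.range emb
      · obtain ⟨c, hc⟩ := hp
        have hcC : c ∈ C := mem_filter.mpr ⟨mem_univ c, hc ▸ mem_image_of_mem g (mem_univ p)⟩
        rw [comp_apply, ← hc, hemb.extend_apply, Pi.sub_apply, h c hcC, hc, hg.extend_apply,
          add_sub_cancel_left]
      · rw [comp_apply, extend_apply' _ _ _ hp, Pi.zero_apply, hy p ((hF p).mpr hp)]
  rw [filter_congr fun r _ => hfiber r, ← hC]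
  exact hM C (hC ▸ card_le_univ Fᶜ) _

lemma BalancedTwise.sum_add_extend_comp_mul_pow [NeZero q] {ρ γ β : Type*} [Fintype ρ]
    [Fintype γ] [DecidableEq γ] [Fintype β] [DecidableEq β] {κ t : ℕ}
    {P : (Fin κ → Fin q) → ℝ} (hP : BalancedTwise q t P) (htκ : t ≤ κ) {M : ρ → γ → Fin q}
    (hM : ∀ C : Finset γ, #C ≤ κ → IsOrthogonalOn M C) (u : γ → Fin q) {emb : γ → β}
    (hemb : Injective emb) (hβ : Fintype.card β - Fintype.card γ ≤ t) {g : Fin κ → β}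
    (hg : Injective g) (z : Fin κ → Fin q) :
    (∑ r, P (z + extend emb (M r - u) 0 ∘ g)) * (q : ℝ) ^ κ = Fintype.card ρ * ∑ y, P y := by
  set F : Finset (Fin κ) := {p | g p ∉ univ.image emb}
  have hF : ∀ p, p ∈ F ↔ g p ∉ Set.range emb := by simp [F]
  have hFt : #F ≤ t := by
    have hsub : F.image g ⊆ (univ.image emb)ᶜ := by
      intro b; simp only [F, mem_image, mem_filter, mem_univ, true_and, mem_compl]
      rintro ⟨p, hp, rfl⟩; exact hp
    calc #F = #(F.image g) := (card_image_of_injective F hg).symm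
      _ ≤ #(univ.image emb)ᶜ := card_le_card hsub
      _ ≤ t := by rwa [card_compl, card_image_of_injective _ hemb, card_univ]
  simpa using (hP.isBalancedOn htκ hFt).sum_add_mul_pow _
    (card_filter_extend_comp_mul_pow hemb hg (by simpa using hM) u hF) z

lemma sum_comp_mul_pow [NeZero q] {ι γ : Type*} [Fintype ι] [DecidableEq ι] [Fintype γ]
    [DecidableEq γ] (P : (ι → Fin q) → ℝ) {idx : ι → γ} (hidx : Injective idx) :
    (∑ x : γ → Fin q, P (x ∘ idx)) * (q : ℝ) ^ Fintype.card ι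
      = q ^ Fintype.card γ * ∑ y, P y := by
  have hfiber (y : ι → Fin q) : #{x : γ → Fin q | x ∘ idx = y} * q ^ #(∅ : Finset ι)ᶜ
      = if ∀ p ∈ (∅ : Finset ι), y p = 0 then Fintype.card (γ → Fin q) else 0 := by
    have hcount := isOrthogonalOn_id (q := q) (univ.image idx) (extend idx y 0)
    rw [card_image_of_injective _ hidx, card_univ] at hcount
    simpa [funext_iff, hidx.extend_apply] using hcount
  simpa using (isBalancedOn_empty P).sum_add_mul_pow _ hfiber 0

namespace CSPInstance

variable {k n : ℕ} (I : CSPInstance q k n)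

lemma sum_value_eq [NeZero q] {ρ : Type*} [Fintype ρ] (x : ρ → Fin n → Fin q)
    (hx : ∀ i, (∑ r, I.P i (fun s => x r (I.idx i s))) * (q : ℝ) ^ I.arity i
      = Fintype.card ρ * ∑ y, I.P i y) :
    ∑ r, I.value (x r) = Fintype.card ρ * ∑ i, I.w i * ((∑ y, I.P i y) / q ^ I.arity i) := by
  simp only [value]
  rw [sum_comm, mul_sum]
  refine sum_congr rfl fun i _ => ?_
  rw [← mul_sum, mul_left_comm, ← mul_div_assoc, ← hx i,
    mul_div_cancel_right₀ _ (pow_ne_zero _ (NeZero.ne _))]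

lemma avg_eq [NeZero q] : I.avg = ∑ i, I.w i * ((∑ y, I.P i y) / q ^ I.arity i) := by
  have hsum := I.sum_value_eq (fun x => x) fun i => by
    simpa [comp_def] using sum_comp_mul_pow (I.P i) (I.idx_mono i).injective
  rw [avg, hsum, Fintype.card_fun, Fintype.card_fin, Fintype.card_fin, Nat.cast_pow,
    mul_div_cancel_left₀ _ (pow_ne_zero _ (NeZero.ne _))]

lemma wor_le_value (x : Fin n → Fin q) : I.wor ≤ I.value x :=
  csInf_le (Set.finite_range _).bddBelow ⟨x, rfl⟩

lemma exists_value_eq_opt [NeZero q] : ∃ x, I.value x = I.opt :=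
  (Set.range_nonempty _).csSup_mem (Set.finite_range _)

lemma le_avg_of_sum_value_eq {ρ : Type*} [Fintype ρ] [DecidableEq ρ] (x : ρ → Fin n → Fin q)
    (hx : ∑ r, I.value (x r) = Fintype.card ρ * I.avg) {S : Finset ρ}
    (hS : ∀ r ∈ S, I.value (x r) = I.opt) (hSne : S.Nonempty) :
    (#S : ℝ) / Fintype.card ρ * I.opt + (1 - (#S : ℝ) / Fintype.card ρ) * I.wor ≤ I.avg := by
  have hρ : (0 : ℝ) < Fintype.card ρ := by
    exact_mod_cast hSne.card_pos.trans_le (card_le_univ S)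
  have hsplit : #S * I.opt + #Sᶜ * I.wor ≤ Fintype.card ρ * I.avg := by
    rw [← hx, ← sum_add_sum_compl S, sum_congr rfl hS, sum_const, nsmul_eq_mul]
    gcongr
    simpa using card_nsmul_le_sum Sᶜ _ _ fun r _ => I.wor_le_value (x r)
  have hcompl : (#Sᶜ : ℝ) = Fintype.card ρ - #S := by
    rw [card_compl, Nat.cast_sub (card_le_univ S)]
  calc (#S : ℝ) / Fintype.card ρ * I.opt + (1 - (#S : ℝ) / Fintype.card ρ) * I.wor
      = (#S * I.opt + #Sᶜ * I.wor) / Fintype.card ρ := by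
        rw [hcompl]; field_simp
    _ ≤ Fintype.card ρ * I.avg / Fintype.card ρ := by gcongr
    _ = I.avg := by field_simp

end CSPInstance

theorem avg_diff_ratio_of_balanced_twise_general
    (q k t n ν R Rstar : ℕ) (hq : 2 ≤ q)
    (I : CSPInstance q k n)
    (hbal : ∀ i : Fin I.m, t ≤ I.arity i ∧ BalancedTwise q t (I.P i))
    (hcol : I.StrongColoring ν)
    (M : Fin R → Fin (ν - t) → Fin q) (hOA : IsOA R (ν - t) q (min k (ν - t)) M)
    (u : Fin (ν - t) → Fin q)
    (hu : (Finset.univ.filter fun r => M r = u).card = Rstar)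
    (hRs : 0 < Rstar) :
    (Rstar : ℝ) / R * I.opt + (1 - (Rstar : ℝ) / R) * I.wor ≤ I.avg := by
  have : NeZero q := ⟨by omega⟩
  obtain ⟨col, hcol⟩ := hcol
  obtain ⟨xopt, hxopt⟩ := I.exists_value_eq_opt
  let shift (r : Fin R) : Fin ν → Fin q := extend (Fin.castLE (ν.sub_le t)) (M r - u) 0
  have hsum : ∑ r, I.value (xopt + shift r ∘ col) = Fintype.card (Fin R) * I.avg := by
    rw [I.avg_eq, I.sum_value_eq _ fun i => ?_]
    have hM (C : Finset (Fin (ν - t))) (hC : #C ≤ I.arity i) : IsOrthogonalOn M C :=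
      hOA.isOrthogonalOn (min_le_right _ _)
        (le_min (hC.trans (I.arity_le i)) (by simpa using card_le_univ C))
    exact (hbal i).2.sum_add_extend_comp_mul_pow (hbal i).1 hM u (Fin.castLE_injective _)
      (by simp only [Fintype.card_fin]; omega) (hcol i) _
  have hopt : ∀ r ∈ univ.filter (M · = u), I.value (xopt + shift r ∘ col) = I.opt := by
    intro r hr
    simp [shift, (mem_filter.mp hr).2, extend_zero, hxopt]
  have hratio := I.le_avg_of_sum_value_eq _ hsum hopt (card_pos.mp (hu ▸ hRs))
  rwa [hu, Fintype.card_fin] at hratio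

/-- Let `q ≥ 2`, `k ≥ 2`, `t ∈ {1, ..., k−1}`, and let `I` be a
maximization instance of `k CSP-q` with `opt(I) ≠ wor(I)` in which every constraint
function has arity at least `t` and is balanced `t`-wise independent, and which admits a
strong coloring with `ν ≥ k` colors. If there is an orthogonal array
`OA(R, ν−t, q, min k (ν−t))` in which some word of `Σ_q^{ν−t}` occurs as a row exactly
`R* > 0` times, then `E[v(I,X)] ≥ (R*/R)·opt(I) + (1 − R*/R)·wor(I)`. -/
theorem avg_diff_ratio_of_balanced_twise
    (q k t n ν R Rstar : ℕ) (hq : 2 ≤ q) (hk : 2 ≤ k) (ht1 : 1 ≤ t) (htk : t ≤ k - 1)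
    (hνk : k ≤ ν)
    (I : CSPInstance q k n) (hne : I.opt ≠ I.wor)
    (hbal : ∀ i : Fin I.m, t ≤ I.arity i ∧ BalancedTwise q t (I.P i))
    (hcol : I.StrongColoring ν)
    (M : Fin R → Fin (ν - t) → Fin q) (hOA : IsOA R (ν - t) q (min k (ν - t)) M)
    (u : Fin (ν - t) → Fin q)
    (hu : (Finset.univ.filter fun r => M r = u).card = Rstar)
    (hRs : 0 < Rstar) :
    (Rstar : ℝ) / R * I.opt + (1 - (Rstar : ℝ) / R) * I.wor ≤ I.avg :=
  avg_diff_ratio_of_balanced_twise_general q k t n ν R Rstar hq I hbal hcol M hOA u hu hRs
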